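/- Let A ⊆ ℝ^d be open and k, l ≥ 1 with l ≥ k. Let 𝒳_{k+1} and 𝒳_{l+1} be sets of k+1 and l+1 of the i.i.d. points sharing exactly j points in common. Then E[h_{n,r,k+1,A,ρ}(𝒳_{k+1}) · h_{n,r,l+1,A,ρ}(𝒳_{l+1})] = ∏_{i=1}^{l} p_i^{C(k+1,i+1) + C(l+1,i+1) − C(j,i+1)} · E[h_{n,r,k+1,A}(𝒳_{k+1}) · h_{n,r,l+1,A}(𝒳_{l+1})], and the same identity holds with h replaced by the Čech indicators 𝔥. -/

import Mathlib

open MeasureTheory ProbabilityTheory Filter Finset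
open scoped ENNReal NNReal ProbabilityTheory Topology

noncomputable section

/-- Points of Euclidean space `ℝ^d`. -/
abbrev Pt (d : ℕ) : Type := EuclideanSpace ℝ (Fin d)

/-- Lexicographic (weak) order on `ℝ^d`. -/
def lexLe {d : ℕ} (x y : Pt d) : Prop :=
  x = y ∨ ∃ i : Fin d, (∀ j : Fin d, j < i → x j = y j) ∧ x i < y i

/-- The lexicographically smallest among the points `Y i`, `i ∈ S`, lies in `A`. -/
def lmpIn {d : ℕ} (Y : ℕ → Pt d) (S : Finset ℕ) (A : Set (Pt d)) : Prop :=
  ∃ i ∈ S, (∀ j ∈ S, lexLe (Y i) (Y j)) ∧ Y i ∈ A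

/-- Vietoris–Rips condition at scale `r`: the points indexed by `S` are
pairwise within distance `r`. -/
def ripsCond {d : ℕ} (Y : ℕ → Pt d) (r : ℝ) (S : Finset ℕ) : Prop :=
  ∀ i ∈ S, ∀ j ∈ S, dist (Y i) (Y j) ≤ r

/-- Čech condition at scale `r`: the closed balls of radius `r/2` centered at the
points indexed by `S` have a common point. -/
def cechCond {d : ℕ} (Y : ℕ → Pt d) (r : ℝ) (S : Finset ℕ) : Prop :=
  ∃ z : Pt d, ∀ i ∈ S, dist z (Y i) ≤ r / 2

/-- `S` spans a face of the soft complex with geometric condition `geo` and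
retention data `V`: the geometric condition holds, and every sub-face of
dimension at least 1 (i.e. every subset with at least 2 elements) is retained. -/
def softFace {d : ℕ} (geo : (ℕ → Pt d) → ℝ → Finset ℕ → Prop)
    (Y : ℕ → Pt d) (V : Finset ℕ → Bool) (r : ℝ) (S : Finset ℕ) : Prop :=
  geo Y r S ∧ ∀ T : Finset ℕ, T ⊆ S → 2 ≤ T.card → V T = true

open Classical in
/-- The number of `k`-faces of the soft complex built on the first `m` points,
whose lexicographically smallest vertex lies in `A`. -/
def faceCount {d : ℕ} (geo : (ℕ → Pt d) → ℝ → Finset ℕ → Prop)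
    (Y : ℕ → Pt d) (V : Finset ℕ → Bool) (r : ℝ) (A : Set (Pt d)) (k m : ℕ) : ℕ :=
  (((Finset.range m).powersetCard (k + 1)).filter
    (fun S => softFace geo Y V r S ∧ lmpIn Y S A)).card

/-- Prepend the origin to a tuple of points: `withZero y 0 = 0`,
`withZero y i = y (i-1)` for `1 ≤ i ≤ m`. -/
def withZero {d m : ℕ} (y : Fin m → Pt d) : ℕ → Pt d :=
  fun i => if h : 1 ≤ i ∧ i ≤ m then y ⟨i - 1, by omega⟩ else 0

open Classical in
/-- The constant `μ_{k+1,A}` (for `geo = ripsCond`) resp. `ν_{k+1,A}`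
(for `geo = cechCond`). -/
def geomConst {d : ℕ} (geo : (ℕ → Pt d) → ℝ → Finset ℕ → Prop)
    (k : ℕ) (f : Pt d → ℝ) (A : Set (Pt d)) : ℝ :=
  (((k + 1).factorial : ℝ))⁻¹ * (∫ x in A, f x ^ (k + 1)) *
    ∫ y : Fin k → Pt d, (if geo (withZero y) 1 (Finset.range (k + 1)) then (1 : ℝ) else 0)

/-- Cumulative distribution function of the standard normal distribution. -/
def stdGaussCDF (t : ℝ) : ℝ := ((gaussianReal 0 1) (Set.Iic t)).toReal

/-- `Z n` converges in distribution to the standard normal `N(0,1)`. -/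
def TendstoStdGauss {Ω : Type*} [MeasureSpace Ω] (Z : ℕ → Ω → ℝ) : Prop :=
  ∀ t : ℝ, Tendsto (fun n => (ℙ {ω | Z n ω ≤ t}).toReal) atTop (𝓝 (stdGaussCDF t))

/-- `F n ∼ G n`: asymptotic equivalence. -/
def Asymp (F G : ℕ → ℝ) : Prop := Tendsto (fun n => F n / G n) atTop (𝓝 1)

/-- Covariance of two real random variables. -/
def cov {Ω : Type*} [MeasureSpace Ω] (Z W : Ω → ℝ) : ℝ :=
  (∫ ω, Z ω * W ω) - (∫ ω, Z ω) * (∫ ω, W ω)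

open Classical in
/-- The number of `(k+1)`-subsets of the first `m` points which span a `k`-simplex
(geometric condition `geo`), have lexicographically smallest point in `A`, and form
a connected component: no other point lies within distance `r` of the subset. -/
def compCount {d : ℕ} (geo : (ℕ → Pt d) → ℝ → Finset ℕ → Prop)
    (Y : ℕ → Pt d) (r : ℝ) (A : Set (Pt d)) (k m : ℕ) : ℕ :=
  (((Finset.range m).powersetCard (k + 1)).filter
    (fun S => geo Y r S ∧ lmpIn Y S A ∧
      ∀ j ∈ Finset.range m, j ∉ S → ∀ i ∈ S, r < dist (Y j) (Y i))).card

open Classical in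
/-- The constant `Φ_{j,A}(f_k,f_l)` (for `geo = ripsCond`) resp. `Θ_{j,A}(f_k,f_l)`
(for `geo = cechCond`). -/
def PhiConst {d : ℕ} (geo : (ℕ → Pt d) → ℝ → Finset ℕ → Prop)
    (k l j : ℕ) (f : Pt d → ℝ) (A : Set (Pt d)) : ℝ :=
  ((∫ x in A, f x ^ (k + l + 2 - j)) /
      ((j.factorial : ℝ) * (k + 1 - j).factorial * (l + 1 - j).factorial)) *
    ∫ y : Fin (k + l + 1 - j) → Pt d,
      (if geo (withZero y) 1 (Finset.range (k + 1)) ∧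
          geo (withZero y) 1 (Finset.range j ∪ Finset.Ico (k + 1) (k + l + 2 - j))
        then (1 : ℝ) else 0)

/-- The axis-parallel half-open cube of side length `r` at lattice position `v`. -/
def cube {d : ℕ} (r : ℝ) (v : Fin d → ℤ) : Set (Pt d) :=
  {x | ∀ i : Fin d, (v i : ℝ) * r ≤ x i ∧ x i < ((v i : ℝ) + 1) * r}

/-!
Both soft events split as "the geometric event" and "every face of dimension at least one of
`S1` or `S2` is retained". The coins are independent of the points and of each other, so the
probability factors; a face of dimension `i` is a subset of size `i + 1` of `S1` or of `S2`, and
by inclusion–exclusion there are `C(k+1,i+1) + C(l+1,i+1) − C(j,i+1)` of them.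
-/

section Measurability

@[fun_prop]
theorem measurable_lexLe {d : ℕ} (a b : ℕ) :
    Measurable fun Y : ℕ → Pt d => lexLe (Y a) (Y b) := by
  unfold lexLe; fun_prop

@[fun_prop]
theorem measurable_lmpIn {d : ℕ} (S : Finset ℕ) {A : Set (Pt d)} (hA : MeasurableSet A) :
    Measurable fun Y : ℕ → Pt d => lmpIn Y S A := by
  unfold lmpIn; fun_prop

@[fun_prop]
theorem measurable_ripsCond {d : ℕ} (r : ℝ) (S : Finset ℕ) :
    Measurable fun Y : ℕ → Pt d => ripsCond Y r S := by
  unfold ripsCond; fun_prop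

theorem isClosed_setOf_exists_forall_dist_le {E ι : Type*} [NormedAddCommGroup E]
    [ProperSpace E] (s : Set ι) (c : ℝ) :
    IsClosed {y : ι → E | ∃ z, ∀ i ∈ s, dist z (y i) ≤ c} := by
  rcases s.eq_empty_or_nonempty with rfl | ⟨i₀, hi₀⟩
  · simp
  -- translating by `y i₀`, the common point ranges over a compact ball
  have : CompactSpace (Metric.closedBall (0 : E) c) :=
    isCompact_iff_compactSpace.mp (isCompact_closedBall 0 c)
  have hK : IsClosed {p : Metric.closedBall (0 : E) c × (ι → E) |
      ∀ i ∈ s, dist (p.2 i₀ + p.1) (p.2 i) ≤ c} := by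
    simp only [Set.ofPred_forall]
    exact isClosed_biInter fun i _ => isClosed_le (by fun_prop) continuous_const
  convert isClosedMap_snd_of_compactSpace _ hK using 1
  ext y
  constructor
  · rintro ⟨z, hz⟩
    refine ⟨(⟨z - y i₀, ?_⟩, y), by simpa using hz, rfl⟩
    simpa [dist_eq_norm] using hz i₀ hi₀
  · rintro ⟨⟨w, y⟩, hw, rfl⟩
    exact ⟨y i₀ + w, hw⟩

@[fun_prop]
theorem measurable_cechCond {d : ℕ} (r : ℝ) (S : Finset ℕ) :
    Measurable fun Y : ℕ → Pt d => cechCond Y r S :=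
  measurableSet_setOfPred.1
    (isClosed_setOf_exists_forall_dist_le (S : Set ℕ) (r / 2)).measurableSet

end Measurability

section Combinatorics

variable {α : Type*} [DecidableEq α]

/-- The faces of dimension at least one of `S₁` or `S₂`: those whose retention makes both of them
faces of the soft complex. -/
def jointFaces (S₁ S₂ : Finset α) : Finset (Finset α) :=
  (S₁.powerset ∪ S₂.powerset).filter fun T => 2 ≤ T.card

theorem mem_jointFaces {S₁ S₂ T : Finset α} :
    T ∈ jointFaces S₁ S₂ ↔ (T ⊆ S₁ ∨ T ⊆ S₂) ∧ 2 ≤ T.card := by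
  simp [jointFaces]

theorem Finset.powersetCard_inter (S₁ S₂ : Finset α) (m : ℕ) :
    S₁.powersetCard m ∩ S₂.powersetCard m = (S₁ ∩ S₂).powersetCard m := by
  ext T
  simp only [mem_inter, mem_powersetCard, subset_inter_iff]
  tauto

theorem Finset.card_powersetCard_union (S₁ S₂ : Finset α) (m : ℕ) :
    (S₁.powersetCard m ∪ S₂.powersetCard m).card =
      S₁.card.choose m + S₂.card.choose m - (S₁ ∩ S₂).card.choose m := by
  rw [card_union, powersetCard_inter, card_powersetCard, card_powersetCard, card_powersetCard]

theorem filter_jointFaces_card_sub_one_eq {S₁ S₂ : Finset α} {i : ℕ} (hi : 1 ≤ i) :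
    (jointFaces S₁ S₂).filter (fun T => T.card - 1 = i) =
      S₁.powersetCard (i + 1) ∪ S₂.powersetCard (i + 1) := by
  ext T
  have hcard : 2 ≤ T.card ∧ T.card - 1 = i ↔ T.card = i + 1 := by omega
  simp only [mem_filter, mem_jointFaces, mem_union, mem_powersetCard, and_assoc, hcard]
  tauto

theorem prod_jointFaces {M : Type*} [CommMonoid M] (q : ℕ → M) {S₁ S₂ : Finset α}
    (h : S₁.card ≤ S₂.card) :
    ∏ T ∈ jointFaces S₁ S₂, q (T.card - 1) =
      ∏ i ∈ Icc 1 (S₂.card - 1),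
        q i ^ (S₁.card.choose (i + 1) + S₂.card.choose (i + 1) -
          (S₁ ∩ S₂).card.choose (i + 1)) := by
  have hmaps : ∀ T ∈ jointFaces S₁ S₂, T.card - 1 ∈ Icc 1 (S₂.card - 1) := by
    intro T hT
    obtain ⟨hsub, hT2⟩ := mem_jointFaces.1 hT
    have : T.card ≤ S₂.card := hsub.elim (fun h₁ => (card_le_card h₁).trans h) card_le_card
    rw [mem_Icc]
    omega
  rw [← prod_fiberwise_of_maps_to' hmaps]
  refine prod_congr rfl fun i hi => ?_
  rw [prod_const, filter_jointFaces_card_sub_one_eq (mem_Icc.1 hi).1, card_powersetCard_union]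

end Combinatorics

section Probability

variable {Ω : Type*} [MeasurableSpace Ω] {μ : Measure Ω}

theorem measure_forall_inter_preimage_eq_mul {ι β : Type*} [MeasurableSpace β]
    {V : ι → Ω → Bool} {Z : Ω → β} (hV : iIndepFun V μ)
    (hVZ : IndepFun (fun ω T => V T ω) Z μ) (F : Finset ι) {E : Set β} (hE : MeasurableSet E) :
    μ ({ω | ∀ T ∈ F, V T ω = true} ∩ Z ⁻¹' E) =
      (∏ T ∈ F, μ {ω | V T ω = true}) * μ (Z ⁻¹' E) := by
  have hF : MeasurableSet {g : ι → Bool | ∀ T ∈ F, g T = true} := by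
    simp only [Set.ofPred_forall]
    exact F.measurableSet_biInter fun T _ => measurableSet_setOfPred.2 (by fun_prop)
  have hpre : {ω | ∀ T ∈ F, V T ω = true} = (fun ω T => V T ω) ⁻¹' {g | ∀ T ∈ F, g T = true} :=
    rfl
  have hinter : {ω | ∀ T ∈ F, V T ω = true} = ⋂ T ∈ F, {ω | V T ω = true} := by
    ext; simp
  rw [hpre, hVZ.measure_inter_preimage_eq_mul _ _ hF hE, ← hpre, hinter,
    hV.meas_biInter (s := fun T => {ω | V T ω = true})
      fun T _ => ⟨{true}, measurableSet_singleton true, rfl⟩]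

theorem measure_softFace_pair_eq {d : ℕ} (geo : (ℕ → Pt d) → ℝ → Finset ℕ → Prop)
    (X : ℕ → Ω → Pt d) (V : Finset ℕ → Ω → Bool) (c : ℝ) (q : ℕ → ℝ) (hq : ∀ i, 0 ≤ q i)
    (hVprob : ∀ S : Finset ℕ, 2 ≤ S.card →
      μ {ω | V S ω = true} = ENNReal.ofReal (q (S.card - 1)))
    (hV : iIndepFun V μ) (hVX : IndepFun (fun ω S => V S ω) (fun ω i => X i ω) μ)
    (A : Set (Pt d)) {S₁ S₂ : Finset ℕ} (hS : S₁.card ≤ S₂.card)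
    (hgeo : MeasurableSet
      {Y : ℕ → Pt d | (geo Y c S₁ ∧ lmpIn Y S₁ A) ∧ (geo Y c S₂ ∧ lmpIn Y S₂ A)}) :
    (μ {ω | (softFace geo (fun i => X i ω) (fun S => V S ω) c S₁ ∧
        lmpIn (fun i => X i ω) S₁ A) ∧ (softFace geo (fun i => X i ω) (fun S => V S ω) c S₂ ∧
        lmpIn (fun i => X i ω) S₂ A)}).toReal =
      (∏ i ∈ Icc 1 (S₂.card - 1), q i ^ (S₁.card.choose (i + 1) + S₂.card.choose (i + 1) -
        (S₁ ∩ S₂).card.choose (i + 1))) *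
      (μ {ω | (geo (fun i => X i ω) c S₁ ∧ lmpIn (fun i => X i ω) S₁ A) ∧
        (geo (fun i => X i ω) c S₂ ∧ lmpIn (fun i => X i ω) S₂ A)}).toReal := by
  have hsplit : {ω | (softFace geo (fun i => X i ω) (fun S => V S ω) c S₁ ∧
        lmpIn (fun i => X i ω) S₁ A) ∧ (softFace geo (fun i => X i ω) (fun S => V S ω) c S₂ ∧
        lmpIn (fun i => X i ω) S₂ A)} =
      {ω | ∀ T ∈ jointFaces S₁ S₂, V T ω = true} ∩ (fun ω i => X i ω) ⁻¹'
        {Y | (geo Y c S₁ ∧ lmpIn Y S₁ A) ∧ (geo Y c S₂ ∧ lmpIn Y S₂ A)} := by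
    ext ω
    simp only [softFace, Set.mem_ofPred_eq, Set.mem_inter_iff, Set.mem_preimage, mem_jointFaces]
    grind
  have hprob : ∀ T ∈ jointFaces S₁ S₂, (μ {ω | V T ω = true}).toReal = q (T.card - 1) :=
    fun T hT => by rw [hVprob T (mem_jointFaces.1 hT).2, ENNReal.toReal_ofReal (hq _)]
  rw [hsplit, measure_forall_inter_preimage_eq_mul hV hVX _ hgeo, ENNReal.toReal_mul,
    ENNReal.toReal_prod, prod_congr rfl hprob, prod_jointFaces q hS]
  rfl

end Probability

theorem statement_5_general
    {Ω : Type*} [MeasureSpace Ω]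
    (d : ℕ)
    (X : ℕ → Ω → Pt d) (r : ℕ → ℝ)
    (p : ℕ → ℕ → ℝ) (U : ℕ → Finset ℕ → Ω → Bool)
    (hp : ∀ i n, p i n ∈ Set.Icc (0 : ℝ) 1)
    (hUprob : ∀ n (S : Finset ℕ), 2 ≤ S.card →
      ℙ {ω | U n S ω = true} = ENNReal.ofReal (p (S.card - 1) n))
    (hUindep : ∀ n, iIndepFun (fun S ω => U n S ω) ℙ)
    (hUX : ∀ n, IndepFun (fun ω S => U n S ω) (fun ω i => X i ω) ℙ)
    (A : Set (Pt d)) (hA : IsOpen A)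
    (k l j : ℕ) (hkl : k ≤ l)
    (S1 S2 : Finset ℕ) (hS1 : S1.card = k + 1) (hS2 : S2.card = l + 1)
    (hS12 : (S1 ∩ S2).card = j) :
    ∀ n : ℕ,
      (ℙ {ω | (softFace ripsCond (fun i => X i ω) (fun S => U n S ω) (r n) S1 ∧ lmpIn (fun i => X i ω) S1 A) ∧ (softFace ripsCond (fun i => X i ω) (fun S => U n S ω) (r n) S2 ∧ lmpIn (fun i => X i ω) S2 A)}).toReal =
        (∏ i ∈ Finset.Icc 1 l, p i n ^ ((k + 1).choose (i + 1) + (l + 1).choose (i + 1) - j.choose (i + 1))) * (ℙ {ω | (ripsCond (fun i => X i ω) (r n) S1 ∧ lmpIn (fun i => X i ω) S1 A) ∧ (ripsCond (fun i => X i ω) (r n) S2 ∧ lmpIn (fun i => X i ω) S2 A)}).toReal ∧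
      (ℙ {ω | (softFace cechCond (fun i => X i ω) (fun S => U n S ω) (r n) S1 ∧ lmpIn (fun i => X i ω) S1 A) ∧ (softFace cechCond (fun i => X i ω) (fun S => U n S ω) (r n) S2 ∧ lmpIn (fun i => X i ω) S2 A)}).toReal =
        (∏ i ∈ Finset.Icc 1 l, p i n ^ ((k + 1).choose (i + 1) + (l + 1).choose (i + 1) - j.choose (i + 1))) * (ℙ {ω | (cechCond (fun i => X i ω) (r n) S1 ∧ lmpIn (fun i => X i ω) S1 A) ∧ (cechCond (fun i => X i ω) (r n) S2 ∧ lmpIn (fun i => X i ω) S2 A)}).toReal := by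
  intro n
  have hS : S1.card ≤ S2.card := by omega
  have hlmp : ∀ S, Measurable fun Y : ℕ → Pt d => lmpIn Y S A :=
    fun S => measurable_lmpIn S hA.measurableSet
  have key := fun geo => measure_softFace_pair_eq geo X (U n) (r n) (p · n)
    (fun i => (hp i n).1) (hUprob n) (hUindep n) (hUX n) A hS
  rw [hS1, hS2, hS12, Nat.add_sub_cancel] at key
  exact ⟨key ripsCond (measurableSet_setOfPred.2 (by fun_prop)),
    key cechCond (measurableSet_setOfPred.2 (by fun_prop))⟩

/-- **Product of soft face indicators over two overlapping simplices.** If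
`𝒳_{k+1}` and `𝒳_{l+1}` (given by index sets `S1`, `S2` of cardinalities `k+1`
and `l+1`) share exactly `j` points, then `E[h_ρ(𝒳_{k+1})·h_ρ(𝒳_{l+1})] =
∏_{i=1}^l p_i^{C(k+1,i+1)+C(l+1,i+1)−C(j,i+1)} · E[h(𝒳_{k+1})·h(𝒳_{l+1})]`, for the
Rips and Čech indicators alike. -/
theorem statement_5
    {Ω : Type*} [MeasureSpace Ω]
    (hprob : IsProbabilityMeasure (ℙ : Measure Ω))
    (d : ℕ) (hd : 1 ≤ d)
    (X : ℕ → Ω → Pt d) (f : Pt d → ℝ) (r : ℕ → ℝ)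
    (hXmeas : ∀ i, Measurable (X i))
    (hXindep : iIndepFun X ℙ)
    (hXlaw : ∀ i, Measure.map (X i) ℙ = volume.withDensity (fun x => ENNReal.ofReal (f x)))
    (hf0 : ∀ x, 0 ≤ f x) (hfbdd : ∃ C : ℝ, ∀ x, f x ≤ C)
    (hrpos : ∀ n, 0 < r n) (hr0 : Tendsto r atTop (𝓝 0))
    (p : ℕ → ℕ → ℝ) (U : ℕ → Finset ℕ → Ω → Bool)
    (hp : ∀ i n, p i n ∈ Set.Icc (0 : ℝ) 1)
    (hUmeas : ∀ n S, Measurable (U n S))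
    (hUprob : ∀ n (S : Finset ℕ), 2 ≤ S.card →
      ℙ {ω | U n S ω = true} = ENNReal.ofReal (p (S.card - 1) n))
    (hUindep : ∀ n, iIndepFun (fun S ω => U n S ω) ℙ)
    (hUX : ∀ n, IndepFun (fun ω S => U n S ω) (fun ω i => X i ω) ℙ)
    (A : Set (Pt d)) (hA : IsOpen A)
    (k l j : ℕ) (hk : 1 ≤ k) (hl : 1 ≤ l) (hkl : k ≤ l)
    (S1 S2 : Finset ℕ) (hS1 : S1.card = k + 1) (hS2 : S2.card = l + 1)
    (hS12 : (S1 ∩ S2).card = j) :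
    ∀ n : ℕ,
      (ℙ {ω | (softFace ripsCond (fun i => X i ω) (fun S => U n S ω) (r n) S1 ∧ lmpIn (fun i => X i ω) S1 A) ∧ (softFace ripsCond (fun i => X i ω) (fun S => U n S ω) (r n) S2 ∧ lmpIn (fun i => X i ω) S2 A)}).toReal =
        (∏ i ∈ Finset.Icc 1 l, p i n ^ ((k + 1).choose (i + 1) + (l + 1).choose (i + 1) - j.choose (i + 1))) * (ℙ {ω | (ripsCond (fun i => X i ω) (r n) S1 ∧ lmpIn (fun i => X i ω) S1 A) ∧ (ripsCond (fun i => X i ω) (r n) S2 ∧ lmpIn (fun i => X i ω) S2 A)}).toReal ∧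
      (ℙ {ω | (softFace cechCond (fun i => X i ω) (fun S => U n S ω) (r n) S1 ∧ lmpIn (fun i => X i ω) S1 A) ∧ (softFace cechCond (fun i => X i ω) (fun S => U n S ω) (r n) S2 ∧ lmpIn (fun i => X i ω) S2 A)}).toReal =
        (∏ i ∈ Finset.Icc 1 l, p i n ^ ((k + 1).choose (i + 1) + (l + 1).choose (i + 1) - j.choose (i + 1))) * (ℙ {ω | (cechCond (fun i => X i ω) (r n) S1 ∧ lmpIn (fun i => X i ω) S1 A) ∧ (cechCond (fun i => X i ω) (r n) S2 ∧ lmpIn (fun i => X i ω) S2 A)}).toReal :=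
  statement_5_general d X r p U hp hUprob hUindep hUX A hA k l j hkl S1 S2 hS1 hS2 hS12
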